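/- No real-time general counter machine accepts the language B = {x ∈ L₂ : ⟦x⟧ = 1} of true prefix-notation boolean expressions over values {0,1} and binary operators {∧, ∨}. -/

import Mathlib

/-- A counter update: add an integer, or reset to zero (the ×0 operation). -/
inductive CUpd where
  | add (m : ℤ)
  | reset
deriving DecidableEq

def CUpd.apply : CUpd → ℤ → ℤ
  | .add m, c => c + m
  | .reset, _ => 0

/-- A general real-time counter machine with states `Fin n` and `k` counters. -/
structure CM (σ : Type) (n k : ℕ) where
  q0 : Fin n
  u : σ → Fin n → (Fin k → Bool) → Fin k → CUpd
  δ : σ → Fin n → (Fin k → Bool) → Fin n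
  F : Set (Fin n × (Fin k → Bool))

/-- Elementwise zero-check: `false` if the counter is 0, `true` otherwise. -/
def zcheck {k : ℕ} (c : Fin k → ℤ) : Fin k → Bool :=
  fun i => decide (c i ≠ 0)

def CM.step {σ : Type} {n k : ℕ} (M : CM σ n k) (cfg : Fin n × (Fin k → ℤ)) (x : σ) :
    Fin n × (Fin k → ℤ) :=
  (M.δ x cfg.1 (zcheck cfg.2), fun i => (M.u x cfg.1 (zcheck cfg.2) i).apply (cfg.2 i))

/-- Real-time run: start at `⟨q₀, 0⟩` and take one transition per input token. -/
def CM.run {σ : Type} {n k : ℕ} (M : CM σ n k) (xs : List σ) : Fin n × (Fin k → ℤ) :=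
  xs.foldl M.step (M.q0, fun _ => 0)

def CM.accepts {σ : Type} {n k : ℕ} (M : CM σ n k) (xs : List σ) : Prop :=
  ((M.run xs).1, zcheck (M.run xs).2) ∈ M.F

def CM.acceptsLang {σ : Type} {n k : ℕ} (M : CM σ n k) (L : Set (List σ)) : Prop :=
  ∀ xs, M.accepts xs ↔ xs ∈ L

/-- An update is incremental if it is `×0` or adds a value in `{-1, 0, +1}`. -/
def CUpd.incremental : CUpd → Prop
  | .add m => m.natAbs ≤ 1
  | .reset => True

/-- A machine is simplified if its updates depend only on the input symbol and
are restricted to `{-1, +0, +1, ×0}`. -/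
def CM.simplified {σ : Type} {n k : ℕ} (M : CM σ n k) : Prop :=
  (∀ x q q' b b', M.u x q b = M.u x q' b') ∧ ∀ x q b i, (M.u x q b i).incremental

/-- The class of languages accepted in real time by general counter machines. -/
def CL (σ : Type) : Set (Set (List σ)) :=
  {L | ∃ n k, ∃ M : CM σ n k, M.acceptsLang L}

inductive BTok where
  | v0
  | v1
  | opAnd
  | opOr
deriving DecidableEq

/-- Compositional evaluation of prefix-notation boolean expressions. -/
inductive BEval : List BTok → Bool → Prop
  | val0 : BEval [BTok.v0] false
  | val1 : BEval [BTok.v1] true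
  | eand {e₁ e₂ : List BTok} {b₁ b₂ : Bool} :
      BEval e₁ b₁ → BEval e₂ b₂ → BEval (BTok.opAnd :: e₁ ++ e₂) (b₁ && b₂)
  | eor {e₁ e₂ : List BTok} {b₁ b₂ : Bool} :
      BEval e₁ b₁ → BEval e₂ b₂ → BEval (BTok.opOr :: e₁ ++ e₂) (b₁ || b₂)

/-!
After reading `p` tokens a real-time machine with `n` states and `k` counters, whose updates
change a counter by at most `C`, is in one of at most `n (2Cp + 1)^k` configurations. The `2^p`
operator words `o₁ … oₚ` lie in pairwise distinct classes of the language: appending values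
`b vₚ … v₁` gives `(…(b oₚ vₚ)…) o₁ v₁`, and suitable values expose the outermost position
where two words differ. As `2^p` eventually exceeds `n (2Cp + 1)^k`, two such words reach the
same configuration, a contradiction.
-/

instance : Fintype BTok :=
  ⟨{.v0, .v1, .opAnd, .opOr}, fun x => by cases x <;> simp⟩

def BTok.ofBool (b : Bool) : BTok := cond b .v1 .v0

def BTok.op (o : Bool) : BTok := cond o .opAnd .opOr

def opSem (o x y : Bool) : Bool := cond o (x && y) (x || y)

/-- One step of evaluating a prefix expression right to left on a stack of values; the last
clause is junk, reached only on ill-formed input. -/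
def stackStep : BTok → List Bool → List Bool
  | .v0, s => false :: s
  | .v1, s => true :: s
  | .opAnd, b₁ :: b₂ :: s => (b₁ && b₂) :: s
  | .opOr, b₁ :: b₂ :: s => (b₁ || b₂) :: s
  | _, s => s

theorem BEval.foldr_stackStep {e : List BTok} {b : Bool} (h : BEval e b) (s : List Bool) :
    e.foldr stackStep s = b :: s := by
  induction h generalizing s with
  | val0 | val1 => rfl
  | eand _ _ ih₁ ih₂ | eor _ _ ih₁ ih₂ => simp [List.foldr_append, ih₁, ih₂, stackStep]

theorem BEval.unique {e : List BTok} {b b' : Bool} (h : BEval e b) (h' : BEval e b') : b = b' := by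
  simpa using (h.foldr_stackStep []).symm.trans (h'.foldr_stackStep [])

/-- `chain [(o₁, v₁), …, (oₚ, vₚ)] b` is `o₁ … oₚ b vₚ … v₁`, i.e. `(…(b oₚ vₚ) … ) o₁ v₁`. -/
def chain : List (Bool × Bool) → Bool → List BTok
  | [], b => [.ofBool b]
  | (o, v) :: l, b => .op o :: (chain l b ++ [.ofBool v])

def chainVal : List (Bool × Bool) → Bool → Bool
  | [], b => b
  | (o, v) :: l, b => opSem o (chainVal l b) v

theorem beval_ofBool (b : Bool) : BEval [.ofBool b] b := by
  cases b
  · exact .val0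
  · exact .val1

theorem beval_chain (l : List (Bool × Bool)) (b : Bool) : BEval (chain l b) (chainVal l b) := by
  induction l with
  | nil => exact beval_ofBool b
  | cons p l ih =>
    obtain ⟨_ | _, v⟩ := p
    · exact .eor ih (beval_ofBool v)
    · exact .eand ih (beval_ofBool v)

theorem beval_chain_true_iff (l : List (Bool × Bool)) (b : Bool) :
    BEval (chain l b) true ↔ chainVal l b = true :=
  ⟨(beval_chain l b).unique, fun h => h ▸ beval_chain l b⟩

theorem chain_zip {os vs : List Bool} (h : os.length = vs.length) (b : Bool) :
    chain (os.zip vs) b = os.map BTok.op ++ BTok.ofBool b :: (vs.map BTok.ofBool).reverse := by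
  induction os generalizing vs with
  | nil => cases vs <;> simp_all [chain]
  | cons o os ih =>
    cases vs with
    | nil => simp at h
    | cons v vs => simp [chain, ih (Nat.succ.inj h)]

theorem chainVal_zip_replicate_true (os : List Bool) (m : ℕ) :
    chainVal (os.zip (List.replicate m true)) true = true := by
  induction os generalizing m with
  | nil => rfl
  | cons o os ih => cases m <;> cases o <;> simp [List.replicate_succ, chainVal, opSem, ih]

/-- Choosing every value as the identity of its operator (`o` itself, for `∧ ↦ true`,
`∨ ↦ false`) strips operators from the outside, and `false` after an all-`true` chain
exposes the outermost one. -/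
theorem eq_of_chainVal_zip_eq {os os' : List Bool} (hlen : os.length = os'.length)
    (h : ∀ vs : List Bool, vs.length = os.length →
      ∀ b, chainVal (os.zip vs) b = chainVal (os'.zip vs) b) :
    os = os' := by
  induction os generalizing os' with
  | nil => exact (List.length_eq_zero_iff.mp hlen.symm).symm
  | cons o os ih =>
    obtain _ | ⟨o', os'⟩ := os'
    · simp at hlen
    have hhead : o = o' := by
      have := h (false :: List.replicate os.length true) (by simp) true
      simp only [List.zip_cons_cons, chainVal, chainVal_zip_replicate_true] at this
      cases o <;> cases o' <;> simp_all [opSem]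
    subst hhead
    congr 1
    refine ih (Nat.succ.inj hlen) fun vs hvs b => ?_
    have := h (o :: vs) (by simp [hvs]) b
    cases o <;> simpa [chainVal, opSem] using this

theorem eq_of_forall_append_mem_iff {os os' : List Bool} (hlen : os.length = os'.length)
    (h : ∀ t, os.map BTok.op ++ t ∈ {x : List BTok | BEval x true} ↔
      os'.map BTok.op ++ t ∈ {x : List BTok | BEval x true}) :
    os = os' := by
  refine eq_of_chainVal_zip_eq hlen fun vs hvs b => Bool.eq_iff_iff.mpr ?_
  have := h (BTok.ofBool b :: (vs.map BTok.ofBool).reverse)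
  rwa [Set.mem_ofPred_eq, Set.mem_ofPred_eq, ← chain_zip hvs.symm,
    ← chain_zip (hlen ▸ hvs.symm), beval_chain_true_iff, beval_chain_true_iff] at this

def CUpd.size : CUpd → ℕ
  | .add m => m.natAbs
  | .reset => 0

theorem CUpd.natAbs_apply_le (u : CUpd) (c : ℤ) : (u.apply c).natAbs ≤ c.natAbs + u.size := by
  cases u <;> simp only [apply, size] <;> omega

noncomputable def cfgBox (n k r : ℕ) : Finset (Fin n × (Fin k → ℤ)) :=
  Finset.univ ×ˢ Fintype.piFinset fun _ => Finset.Icc (-(r : ℤ)) r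

theorem card_cfgBox (n k r : ℕ) : (cfgBox n k r).card = n * (2 * r + 1) ^ k := by
  simp only [cfgBox, Finset.card_product, Finset.card_univ, Fintype.card_fin,
    Fintype.card_piFinset, Int.card_Icc, Finset.prod_const]
  congr 2
  omega

namespace CM

variable {σ : Type} {n k : ℕ} (M : CM σ n k)

theorem run_append (xs ys : List σ) : M.run (xs ++ ys) = ys.foldl M.step (M.run xs) :=
  List.foldl_append

theorem acceptsLang.append_mem_iff_of_run_eq {M : CM σ n k} {L : Set (List σ)}
    (hM : M.acceptsLang L) {xs ys : List σ} (h : M.run xs = M.run ys) (t : List σ) :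
    xs ++ t ∈ L ↔ ys ++ t ∈ L := by
  rw [← hM, ← hM, accepts, accepts, run_append, run_append, h]

theorem exists_size_update_le [Finite σ] : ∃ C, ∀ x q b i, (M.u x q b i).size ≤ C := by
  obtain ⟨C, hC⟩ := Finite.bddAbove_range
    fun t : σ × Fin n × (Fin k → Bool) × Fin k => (M.u t.1 t.2.1 t.2.2.1 t.2.2.2).size
  exact ⟨C, fun x q b i => hC ⟨(x, q, b, i), rfl⟩⟩

theorem run_mem_cfgBox {C : ℕ} (hC : ∀ x q b i, (M.u x q b i).size ≤ C) (xs : List σ) :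
    M.run xs ∈ cfgBox n k (C * xs.length) := by
  simp only [cfgBox, Finset.mem_product, Finset.mem_univ, Fintype.mem_piFinset, Finset.mem_Icc,
    true_and]
  induction xs using List.reverseRecOn with
  | nil => simp [run]
  | append_singleton xs x ih =>
    intro i
    have hstep := (M.u x (M.run xs).1 (zcheck (M.run xs).2) i).natAbs_apply_le ((M.run xs).2 i)
    have := hC x (M.run xs).1 (zcheck (M.run xs).2) i
    have := ih i
    rw [run_append]
    simp only [List.foldl_cons, List.foldl_nil, step, List.length_append, List.length_singleton,
      Nat.mul_add, Nat.mul_one] at hstep ⊢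
    omega

end CM

theorem exists_mul_pow_lt_two_pow (a b k : ℕ) : ∃ p : ℕ, a * (b * p + 1) ^ k < 2 ^ p := by
  set D : ℕ := a * (b + 1) ^ k
  have hlim := ((tendsto_pow_const_div_const_pow_of_one_lt k one_lt_two).const_mul
    (D : ℝ)).eventually_lt_const (by simp : (D : ℝ) * 0 < 1)
  obtain ⟨p, hp, hlt⟩ := ((Filter.eventually_gt_atTop 0).and hlim).exists
  rw [mul_div_assoc', div_lt_one (by positivity)] at hlt
  refine ⟨p, lt_of_le_of_lt ?_ (by exact_mod_cast hlt)⟩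
  calc a * (b * p + 1) ^ k ≤ a * ((b + 1) * p) ^ k := by gcongr; nlinarith
    _ = D * p ^ k := by rw [mul_pow, mul_assoc]

/-- No real-time general counter machine accepts the language of true
prefix-notation boolean expressions. -/
theorem stmt14 : {x : List BTok | BEval x true} ∉ CL BTok := by
  rintro ⟨n, k, M, hM⟩
  obtain ⟨C, hC⟩ := M.exists_size_update_le
  obtain ⟨p, hp⟩ := exists_mul_pow_lt_two_pow n (2 * C) k
  have hinj : Set.InjOn (fun os : List.Vector Bool p => M.run (os.toList.map BTok.op)) Set.univ :=
    fun os _ os' _ hrun => List.Vector.eq _ _ <|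
      eq_of_forall_append_mem_iff (by simp) (hM.append_mem_iff_of_run_eq hrun)
  have hmaps : ∀ os ∈ (Finset.univ : Finset (List.Vector Bool p)),
      M.run (os.toList.map BTok.op) ∈ cfgBox n k (C * p) := fun os _ => by
    simpa using M.run_mem_cfgBox hC (os.toList.map BTok.op)
  have hcard := Finset.card_le_card_of_injOn _ hmaps (by simpa using hinj)
  rw [Finset.card_univ, card_vector, Fintype.card_bool, card_cfgBox, ← mul_assoc] at hcard
  omega
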